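/- Let q ∈ (0,1], let G₁, G₂ ~ Geom(q) be i.i.d. random variables, and let k₁, k₂ be integers with k₁ < k₂. Then (k₁ + 1 − G₁)₊ + (k₂ − 1 − G₂)₊ ⪯ (k₁ − G₁)₊ + (k₂ − G₂)₊, i.e., for all z ∈ ℝ, P((k₁ + 1 − G₁)₊ + (k₂ − 1 − G₂)₊ ≥ z) ≤ P((k₁ − G₁)₊ + (k₂ − G₂)₊ ≥ z). -/

import Mathlib

/-!
Write `V` and `U` for the left- and right-hand sums and fix an integer threshold `m ≥ 1`.
Compared with `{U ≥ m}`, the event `{V ≥ m}` gains at most `{G₁ = k₁ + 1 - m, G₂ ≥ k₂}`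
and loses at least `{G₁ ≥ k₁ + 1, G₂ = k₂ - m}`.
By independence and memorylessness both have probability `q (1 - q) ^ (k₁ + k₂ - m - 1)`,
so `P(V ≥ m) ≤ P(U ≥ m)`.
-/

open MeasureTheory ProbabilityTheory

theorem measure_le_of_measure_sdiff_le {α : Type*} [MeasurableSpace α] {μ : Measure α}
    {s t : Set α} (hs : MeasurableSet s) (ht : MeasurableSet t) (h : μ (s \ t) ≤ μ (t \ s)) :
    μ s ≤ μ t :=
  calc μ s = μ (s ∩ t) + μ (s \ t) := (measure_inter_add_sdiff s ht).symm
    _ ≤ μ (t ∩ s) + μ (t \ s) := by rw [Set.inter_comm]; gcongr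
    _ = μ t := measure_inter_add_sdiff t hs

section Geometric

variable {Ω : Type*} [MeasurableSpace Ω] {μ : Measure Ω} {q : ℝ}

theorem measure_lt_of_geometric [IsProbabilityMeasure μ] (hq0 : 0 ≤ q) (hq1 : q ≤ 1)
    {G : Ω → ℕ} (hG : Measurable G) (hpos : ∀ ω, 1 ≤ G ω)
    (hdist : ∀ k : ℕ, 1 ≤ k → μ {ω | G ω = k} = ENNReal.ofReal ((1 - q) ^ (k - 1) * q))
    (c : ℕ) : μ {ω | c < G ω} = ENNReal.ofReal ((1 - q) ^ c) := by
  induction c with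
  | zero =>
    have huniv : {ω | 0 < G ω} = Set.univ := Set.eq_univ_of_forall hpos
    simp [huniv]
  | succ c ih =>
    have hsplit : {ω | c < G ω} = {ω | G ω = c + 1} ∪ {ω | c + 1 < G ω} := by
      ext ω; simp only [Set.mem_ofPred_eq, Set.mem_union]; omega
    have hdisj : Disjoint {ω | G ω = c + 1} {ω | c + 1 < G ω} :=
      Set.disjoint_left.2 fun ω h₁ h₂ => (Nat.ne_of_lt h₂) h₁.symm
    have hsum : ENNReal.ofReal ((1 - q) ^ c) =
        ENNReal.ofReal ((1 - q) ^ c * q) + ENNReal.ofReal ((1 - q) ^ (c + 1)) := by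
      rw [← ENNReal.ofReal_add (by positivity) (pow_nonneg (by linarith) _)]
      ring_nf
    rw [hsplit, measure_union hdisj (hG measurableSet_Ioi), hdist (c + 1) c.succ_pos,
      Nat.add_sub_cancel, hsum] at ih
    exact (ENNReal.add_right_inj ENNReal.ofReal_ne_top).1 ih

theorem measure_eq_and_lt_of_geometric [IsProbabilityMeasure μ] (hq0 : 0 ≤ q) (hq1 : q ≤ 1)
    {G₁ G₂ : Ω → ℕ} (hG₂ : Measurable G₂) (hpos₂ : ∀ ω, 1 ≤ G₂ ω)
    (hdist₁ : ∀ k : ℕ, 1 ≤ k → μ {ω | G₁ ω = k} = ENNReal.ofReal ((1 - q) ^ (k - 1) * q))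
    (hdist₂ : ∀ k : ℕ, 1 ≤ k → μ {ω | G₂ ω = k} = ENNReal.ofReal ((1 - q) ^ (k - 1) * q))
    (hindep : IndepFun G₁ G₂ μ) {a : ℕ} (ha : 1 ≤ a) (c : ℕ) :
    μ {ω | G₁ ω = a ∧ c < G₂ ω} = ENNReal.ofReal (q * (1 - q) ^ (a - 1 + c)) := by
  have hprod : μ {ω | G₁ ω = a ∧ c < G₂ ω} = μ {ω | G₁ ω = a} * μ {ω | c < G₂ ω} :=
    hindep.measure_inter_preimage_eq_mul {a} (Set.Ioi c)
      (measurableSet_singleton a) measurableSet_Ioi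
  rw [hprod, hdist₁ a ha, measure_lt_of_geometric hq0 hq1 hG₂ hpos₂ hdist₂,
    ← ENNReal.ofReal_mul (by positivity), pow_add]
  ring_nf

end Geometric

/-- For i.i.d. `G₁, G₂ ~ Geom(q)` (on `{1, 2, …}`) and integers `k₁ < k₂`,
`(k₁+1-G₁)₊ + (k₂-1-G₂)₊ ⪯ (k₁-G₁)₊ + (k₂-G₂)₊`. -/
theorem stmt_4 {Ω : Type*} [MeasurableSpace Ω] (μ : Measure Ω) [IsProbabilityMeasure μ]
    (q : ℝ) (hq0 : 0 < q) (hq1 : q ≤ 1)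
    (G₁ G₂ : Ω → ℕ) (hG₁ : Measurable G₁) (hG₂ : Measurable G₂)
    (hG₁pos : ∀ ω, 1 ≤ G₁ ω) (hG₂pos : ∀ ω, 1 ≤ G₂ ω)
    (hdist₁ : ∀ k : ℕ, 1 ≤ k →
      μ {ω | G₁ ω = k} = ENNReal.ofReal ((1 - q) ^ (k - 1) * q))
    (hdist₂ : ∀ k : ℕ, 1 ≤ k →
      μ {ω | G₂ ω = k} = ENNReal.ofReal ((1 - q) ^ (k - 1) * q))
    (hindep : IndepFun G₁ G₂ μ)
    (k₁ k₂ : ℤ) (hk : k₁ < k₂) :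
    ∀ z : ℝ,
      μ {ω | z ≤ ((max (k₁ + 1 - (G₁ ω : ℤ)) 0 + max (k₂ - 1 - (G₂ ω : ℤ)) 0 : ℤ) : ℝ)} ≤
        μ {ω | z ≤ ((max (k₁ - (G₁ ω : ℤ)) 0 + max (k₂ - (G₂ ω : ℤ)) 0 : ℤ) : ℝ)} := by
  intro z
  simp only [← Int.ceil_le]
  by_cases hm : 0 < ⌈z⌉ ∧ ⌈z⌉ ≤ k₁
  swap
  -- for these thresholds `V ≥ m` already forces `U ≥ m`, as `G₁ ≥ 1`
  · exact measure_mono fun ω hω => by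
      have := hG₁pos ω
      simp only [Set.mem_ofPred_eq] at hω ⊢
      omega
  obtain ⟨hm0, hmk⟩ := hm
  obtain ⟨m, hm⟩ := Int.eq_ofNat_of_zero_le hm0.le
  lift k₁ to ℕ using by omega
  lift k₂ to ℕ using by omega
  rw [hm] at hmk ⊢
  refine measure_le_of_measure_sdiff_le (measurableSet_le measurable_const (by fun_prop))
    (measurableSet_le measurable_const (by fun_prop)) ?_
  calc _ ≤ μ {ω | G₁ ω = k₁ + 1 - m ∧ k₂ - 1 < G₂ ω} := measure_mono fun ω hω => by
          simp only [Set.mem_sdiff, Set.mem_ofPred_eq] at hω ⊢; omega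
    _ = μ {ω | G₂ ω = k₂ - m ∧ k₁ < G₁ ω} := by
          rw [measure_eq_and_lt_of_geometric hq0.le hq1 hG₂ hG₂pos hdist₁ hdist₂ hindep
              (by omega),
            measure_eq_and_lt_of_geometric hq0.le hq1 hG₁ hG₁pos hdist₂ hdist₁ hindep.symm
              (by omega)]
          congr 3
          omega
    _ ≤ _ := measure_mono fun ω hω => by
          simp only [Set.mem_sdiff, Set.mem_ofPred_eq] at hω ⊢; omega
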